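/- arXiv:2605.17901 — 2 statements merged into one kernel-verified Lean document; each statement's English description precedes it below -/
import Mathlib

section
/- Let $\mathbf{G}$ act on $V_a \oplus V_b$ componentwise, and suppose $(\mathbf{G}, V_a)$, $(\mathbf{G}, V_a \oplus V_b)$, and $(\mathbf{G}_{V_a}, V_b)$ are all prehomogeneous spaces, where $\mathbf{G}_{V_a}$ denotes a generic isotropy subgroup of $(\mathbf{G},V_a)$. Then the generic isotropy subgroup of $(\mathbf{G}_{V_a}, V_b)$ coincides with the generic isotropy subgroup of $(\mathbf{G}, V_a \oplus V_b)$; more precisely, if $X_a$ is a generic point of $(\mathbf{G},V_a)$ and $X_b$ a generic point of $(\mathbf{G}_{X_a}, V_b)$, then $(X_a,X_b)$ is a generic point of $(\mathbf{G}, V_a \oplus V_b)$ and $(\mathbf{G}_{X_a})_{X_b} = \mathbf{G}_{(X_a,X_b)}$. -/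
/-- Let `G` act (algebraically) on `Va ⊕ Vb` componentwise, all spaces carrying their Zariski
topologies (the topology `tAB` on the product is given separately, since the Zariski topology
of a product is not the product topology).  The standard dimension facts for orbits of
algebraic group actions — `dim (orbit) = dim G - dim (stabilizer)`, the open-orbit criterion
`orbit open ↔ dim orbit = dim of the space`, also for actions of the isotropy subgroups on
`Vb`, and `dim (Va ⊕ Vb) = dim Va + dim Vb` — are supplied as hypotheses.  Suppose `(G, Va)`,
`(G, Va ⊕ Vb)` and `(G_{Xa}, Vb)` are prehomogeneous, `Xa` is a generic point of `(G, Va)` and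
`Xb` a generic point of `(G_{Xa}, Vb)`.  Then `(Xa, Xb)` is a generic point of `(G, Va ⊕ Vb)`
and `(G_{Xa})_{Xb} = G_{(Xa,Xb)}` (as subgroups of `G`). -/
theorem stmt3 {G Va Vb : Type*} [Group G] [MulAction G Va] [MulAction G Vb]
    [TopologicalSpace Va] [TopologicalSpace Vb] (tAB : TopologicalSpace (Va × Vb))
    (dimG : ℤ) (dimSub : Subgroup G → ℤ)
    (dimA : Set Va → ℤ) (dimB : Set Vb → ℤ) (dimAB : Set (Va × Vb) → ℤ)
    -- orbit–stabilizer dimension formulas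
    (osA : ∀ x : Va, dimA (MulAction.orbit G x) = dimG - dimSub (MulAction.stabilizer G x))
    (osAB : ∀ z : Va × Vb,
      dimAB (MulAction.orbit G z) = dimG - dimSub (MulAction.stabilizer G z))
    (osB : ∀ (H : Subgroup G) (y : Vb),
      dimB (MulAction.orbit H y) = dimSub H - dimSub ((MulAction.stabilizer H y).map H.subtype))
    -- open-orbit criteria
    (openA : ∀ x : Va,
      IsOpen (MulAction.orbit G x) ↔ dimA (MulAction.orbit G x) = dimA Set.univ)
    (openAB : ∀ z : Va × Vb,
      @IsOpen _ tAB (MulAction.orbit G z) ↔ dimAB (MulAction.orbit G z) = dimAB Set.univ)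
    (openB : ∀ (H : Subgroup G) (y : Vb),
      IsOpen (MulAction.orbit H y) ↔ dimB (MulAction.orbit H y) = dimB Set.univ)
    -- dimension of the direct sum
    (dim_prod : dimAB Set.univ = dimA Set.univ + dimB Set.univ)
    -- prehomogeneity hypotheses
    (prehomA : ∃ x : Va, IsOpen (MulAction.orbit G x))
    (prehomAB : ∃ z : Va × Vb, @IsOpen _ tAB (MulAction.orbit G z))
    (Xa : Va) (hXa : IsOpen (MulAction.orbit G Xa))
    (prehomB : ∃ y : Vb, IsOpen (MulAction.orbit (MulAction.stabilizer G Xa) y))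
    (Xb : Vb) (hXb : IsOpen (MulAction.orbit (MulAction.stabilizer G Xa) Xb)) :
    @IsOpen _ tAB (MulAction.orbit G (Xa, Xb)) ∧
    (MulAction.stabilizer (MulAction.stabilizer G Xa) Xb).map
        (MulAction.stabilizer G Xa).subtype
      = MulAction.stabilizer G (Xa, Xb) := by
  have key :
      (MulAction.stabilizer (MulAction.stabilizer G Xa) Xb).map
          (MulAction.stabilizer G Xa).subtype
        = MulAction.stabilizer G (Xa, Xb) := by
    ext g
    simp only [Subgroup.mem_map, MulAction.mem_stabilizer_iff, Subgroup.coe_subtype,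
      Prod.smul_def, Prod.mk.injEq]
    constructor
    · rintro ⟨⟨h, hh⟩, hb, rfl⟩
      exact ⟨hh, hb⟩
    · rintro ⟨ha, hb⟩
      exact ⟨⟨g, ha⟩, hb, rfl⟩
  refine ⟨?_, key⟩
  rw [openAB, osAB, ← key, dim_prod]
  have h1 : dimG - dimSub (MulAction.stabilizer G Xa) = dimA Set.univ := by
    rw [← (openA Xa).mp hXa, osA]
  have h2 := (openB _ Xb).mp hXb
  rw [osB] at h2
  omega
end

section
/- Let $\mathfrak{p}$ be a partition of an odd number $N$. Form the sequence of all even parts of $\mathfrak{p}$ (appending a $0$ if needed to make the count even), arranged decreasingly as $(p_1^*, \ldots, p_{2m}^*)$, apply operation $(\star)$ (replace each pair with $p_{2j-1}^* > p_{2j}^*$ by $(p_{2j-1}^*-1, p_{2j}^*+1)$), and recombine the resulting parts with the odd parts of $\mathfrak{p}$, discarding zeros. Then the result is a partition of $N$ in which every even part occurs with even multiplicity (i.e., the result is the Jordan type of a nilpotent orbit of type $B$). -/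
/-- The operation `(⋆)`: in a sequence read as consecutive pairs, every strictly decreasing
pair `(a, b)` with `a > b` is replaced by `(a - 1, b + 1)`; all other entries are unchanged. -/
def starOp : List ℕ → List ℕ
  | a :: b :: rest => if b < a then (a - 1) :: (b + 1) :: starOp rest
                      else a :: b :: starOp rest
  | l => l

/-- The parts of a multiset listed in non-increasing order. -/
def descSort (s : Multiset ℕ) : List ℕ :=
  (Multiset.sort s (· ≤ ·)).reverse

/-- The even parts of `𝔭`, listed decreasingly, with a `0` appended if needed to make the
number of entries even. -/
def evenSeq (p : Multiset ℕ) : List ℕ :=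
  let l := descSort (p.filter (fun x => x % 2 = 0))
  if l.length % 2 = 0 then l else l ++ [0]

/-- The `B`-collapse algorithm: apply `(⋆)` to the (zero-padded) decreasing sequence of even
parts of `𝔭`, recombine with the odd parts, and discard zeros. -/
def bCollapse (p : Multiset ℕ) : Multiset ℕ :=
  ((starOp (evenSeq p) : List ℕ) : Multiset ℕ).filter (fun x => 0 < x)
    + p.filter (fun x => x % 2 = 1)

/-
On a non-increasing sequence of even numbers, read in consecutive pairs, each pair is either
constant, contributing two copies of an even value, or strictly decreasing, in which case `(⋆)`
turns it into two odd values. So after `(⋆)` every even value occurs an even number of times,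
and the odd parts of `𝔭` add no even parts. `(⋆)` preserves the sum of each pair, hence the total.
-/

theorem starOp_sum (l : List ℕ) : (starOp l).sum = l.sum := by
  induction l using starOp.induct with
  | case1 a b rest h ih => simp only [starOp, if_pos h, List.sum_cons, ih]; omega
  | case2 a b rest h ih => simp only [starOp, if_neg h, List.sum_cons, ih]
  | case3 l h =>
    match l, h with
    | [], _ | [_], _ => rfl
    | a :: b :: r, h => exact (h a b r rfl).elim

theorem even_count_starOp {l : List ℕ} (hl : l.Pairwise (· ≥ ·)) (he : ∀ y ∈ l, Even y)
    (hlen : Even l.length) {x : ℕ} (hx : Even x) : Even ((starOp l).count x) := by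
  induction l using starOp.induct with
  | case1 a b rest h ih =>
    have ha : Even a := he a (by simp)
    have hb : Even b := he b (by simp)
    have hrest := ih (List.pairwise_cons.1 (List.pairwise_cons.1 hl).2).2
      (fun y hy => he y (by simp [hy])) (by simpa [parity_simps] using hlen)
    have hpred : a - 1 ≠ x := fun h => by rw [← h] at hx; grind
    have hsucc : b + 1 ≠ x := fun h => by rw [← h] at hx; grind
    simpa [starOp, h, List.count_cons, hpred, hsucc] using hrest
  | case2 a b rest h ih =>
    obtain ⟨hab, hl⟩ := List.pairwise_cons.1 hl
    have hrest := ih (List.pairwise_cons.1 hl).2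
      (fun y hy => he y (by simp [hy])) (by simpa [parity_simps] using hlen)
    obtain rfl : a = b := le_antisymm (not_lt.1 h) (hab b (by simp))
    simp only [starOp, if_neg h, List.count_cons, beq_iff_eq]
    split_ifs <;> simp [hrest, parity_simps]
  | case3 l h =>
    match l, h with
    | [], _ => exact ⟨0, rfl⟩
    | [_], _ => simp at hlen
    | a :: b :: r, h => exact (h a b r rfl).elim

theorem descSort_pairwise (s : Multiset ℕ) : (descSort s).Pairwise (· ≥ ·) :=
  List.pairwise_reverse.2 (Multiset.pairwise_sort s (· ≤ ·))

theorem mem_descSort {s : Multiset ℕ} {x : ℕ} : x ∈ descSort s ↔ x ∈ s := by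
  rw [descSort, List.mem_reverse, Multiset.mem_sort]

theorem descSort_sum (s : Multiset ℕ) : (descSort s).sum = s.sum := by
  rw [descSort, List.sum_reverse, ← Multiset.sum_coe, Multiset.sort_eq]

theorem evenSeq_pairwise (p : Multiset ℕ) : (evenSeq p).Pairwise (· ≥ ·) := by
  unfold evenSeq
  dsimp only
  split
  · exact descSort_pairwise _
  · exact List.pairwise_append.2 ⟨descSort_pairwise _, by simp, by simp⟩

theorem even_of_mem_evenSeq {p : Multiset ℕ} {x : ℕ} (hx : x ∈ evenSeq p) : Even x := by
  have hfilter : x ∈ descSort (p.filter (fun x => x % 2 = 0)) → Even x := fun h =>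
    Nat.even_iff.2 (Multiset.mem_filter.1 (mem_descSort.1 h)).2
  unfold evenSeq at hx
  dsimp only at hx
  split at hx
  · exact hfilter hx
  · rcases List.mem_append.1 hx with hx | hx
    · exact hfilter hx
    · simp_all

theorem even_length_evenSeq (p : Multiset ℕ) : Even (evenSeq p).length := by
  unfold evenSeq
  dsimp only
  split <;> simp only [List.length_append, List.length_singleton, Nat.even_iff] <;> omega

theorem evenSeq_sum (p : Multiset ℕ) : (evenSeq p).sum = (p.filter (fun x => x % 2 = 0)).sum := by
  unfold evenSeq
  dsimp only
  split <;> simp [descSort_sum]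

theorem Multiset.sum_filter_pos (s : Multiset ℕ) : (s.filter (0 < ·)).sum = s.sum := by
  rw [← Multiset.sum_filter_add_sum_filter_not (0 < ·) (s := s), left_eq_add]
  exact Multiset.sum_eq_zero fun x hx => by have := (Multiset.mem_filter.1 hx).2; omega

theorem bCollapse_sum (p : Multiset ℕ) : (bCollapse p).sum = p.sum := by
  have hodd : p.filter (fun x => x % 2 = 1) = p.filter (fun x => ¬x % 2 = 0) :=
    Multiset.filter_congr fun x _ => by omega
  rw [bCollapse, Multiset.sum_add, Multiset.sum_filter_pos, Multiset.sum_coe, starOp_sum,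
    evenSeq_sum, hodd, Multiset.sum_filter_add_sum_filter_not]

theorem pos_of_mem_bCollapse {p : Multiset ℕ} {x : ℕ} (hx : x ∈ bCollapse p) : 0 < x := by
  rcases Multiset.mem_add.1 hx with hx | hx
  · exact (Multiset.mem_filter.1 hx).2
  · have := (Multiset.mem_filter.1 hx).2; omega

theorem even_count_bCollapse (p : Multiset ℕ) {x : ℕ} (hx : Even x) :
    Even ((bCollapse p).count x) := by
  have hodd : (p.filter (fun x => x % 2 = 1)).count x = 0 :=
    Multiset.count_eq_zero.2 fun h => by
      have := (Multiset.mem_filter.1 h).2; rw [Nat.even_iff] at hx; omega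
  rw [bCollapse, Multiset.count_add, hodd, add_zero, Multiset.count_filter]
  split
  · exact Multiset.coe_count x _ ▸ even_count_starOp (evenSeq_pairwise p)
      (fun _ => even_of_mem_evenSeq) (even_length_evenSeq p) hx
  · exact Even.zero

theorem stmt8_general (N : ℕ) (p : Multiset ℕ)
    (hsum : p.sum = N) :
    (bCollapse p).sum = N ∧
    (∀ x ∈ bCollapse p, 0 < x) ∧
    (∀ x ∈ bCollapse p, Even x → Even ((bCollapse p).count x)) :=
  ⟨bCollapse_sum p ▸ hsum, fun _ => pos_of_mem_bCollapse,
    fun _ _ hx => even_count_bCollapse p hx⟩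

/-- For a partition `𝔭` of an odd number `N`, the result of the `B`-collapse algorithm is a
partition of `N` in which every even part occurs with even multiplicity (i.e. it is the Jordan
type of a nilpotent orbit of type `B`). -/
theorem stmt8 (N : ℕ) (hN : Odd N) (p : Multiset ℕ)
    (hpos : ∀ x ∈ p, 0 < x) (hsum : p.sum = N) :
    (bCollapse p).sum = N ∧
    (∀ x ∈ bCollapse p, 0 < x) ∧
    (∀ x ∈ bCollapse p, Even x → Even ((bCollapse p).count x)) :=
  stmt8_general N p hsum
end
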